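/- Let m_a > 0, m_d ≥ 0, α ∈ (0,1), and w¹, w², d¹, d² ≥ 0 with w¹+d¹ ≤ 1 and w²+d² ≤ 1. Define the stochastic-switching mean matrices M(1) := [[m_a, m_d], [w¹, 1−w¹−d¹]] and M(2) := [[α·m_a, α·m_d], [w², 1−w²−d²]], and assume det M(1) = 0 and det M(2) = 0. Then, ℙ-almost surely, (1/n) · log‖M(I_1)·M(I_2)·…·M(I_n)‖ converges, as n → ∞, to ( s₂·log( m_a + w¹·m_d/m_a ) + s₁·log( α·m_a + w²·m_d/m_a ) ) / (s₁+s₂). -/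

import Mathlib

/-!
Vanishing determinants make both switching matrices rank one with the common row vector
`v = (1, m_d/m_a)`: `M(i) = u_i vᵀ`. A product of such matrices collapses to
`(∏_{k ≥ 2} v ⬝ u_{I_k}) • u_{I_1} vᵀ`, so `log ‖M(I_1) ⋯ M(I_n)‖` is the Birkhoff sum of the
bounded observable `log (v ⬝ u_e)` over `k = 2, …, n` plus the single term `log ‖u_{I_1} vᵀ‖`.
Birkhoff's pointwise ergodic theorem for bounded observables, which follows from the maximal
ergodic inequality, turns the normalised sum into `∑ π_i log (v ⬝ u_i)`, the stated limit.
-/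

open MeasureTheory Filter Topology

/-- The entrywise sum-of-absolute-values "norm" of a real matrix. -/
noncomputable def matNorm {m n : Type*} [Fintype m] [Fintype n] (M : Matrix m n ℝ) : ℝ :=
  ∑ i, ∑ j, |M i j|

/-- The stationary distribution π = (s₂/(s₁+s₂), s₁/(s₁+s₂)) of the binary environment
(environment state "1" is index 0, state "2" is index 1). -/
noncomputable def envPi (s : Fin 2 → ℝ) : Fin 2 → ℝ :=
  ![s 1 / (s 0 + s 1), s 0 / (s 0 + s 1)]

/-- The transition matrix P of the binary environment. -/
noncomputable def envP (s : Fin 2 → ℝ) : Matrix (Fin 2) (Fin 2) ℝ :=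
  !![1 - s 0, s 0; s 1, 1 - s 1]

theorem limsup_eq_limsup_of_tendsto_sub {u v : ℕ → ℝ} {C : ℝ} (hu : ∀ n, |u n| ≤ C)
    (hv : ∀ n, |v n| ≤ C) (h : Tendsto (u - v) atTop (𝓝 0)) :
    limsup u atTop = limsup v atTop := by
  have limsup_le {u v : ℕ → ℝ} (hv : ∀ n, |v n| ≤ C) (h : Tendsto (u - v) atTop (𝓝 0)) :
      limsup u atTop ≤ limsup v atTop := by
    calc limsup u atTop = limsup ((u - v) + v) atTop := by rw [sub_add_cancel]
      _ ≤ limsup (u - v) atTop + limsup v atTop :=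
        limsup_add_le h.isBoundedUnder_ge h.isBoundedUnder_le
          (isCoboundedUnder_le_of_le atTop fun n => (abs_le.1 (hv n)).1)
          (isBoundedUnder_of ⟨C, fun n => (abs_le.1 (hv n)).2⟩)
      _ = limsup v atTop := by rw [h.limsup_eq, zero_add]
  exact (limsup_le hv h).antisymm (limsup_le hu (by rw [← neg_sub, ← neg_zero]; exact h.neg))

section Birkhoff

variable {Ω : Type*} {T : Ω → Ω} {f : Ω → ℝ} {C : ℝ}

theorem abs_birkhoffSum_le (hfC : ∀ x, |f x| ≤ C) (n : ℕ) (x : Ω) :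
    |birkhoffSum T f n x| ≤ n * C :=
  calc |birkhoffSum T f n x| ≤ ∑ k ∈ Finset.range n, |f (T^[k] x)| :=
        Finset.abs_sum_le_sum_abs _ _
    _ ≤ ∑ _k ∈ Finset.range n, C := Finset.sum_le_sum fun k _ => hfC _
    _ = n * C := by simp

theorem abs_birkhoffAverage_le (hfC : ∀ x, |f x| ≤ C) (n : ℕ) (x : Ω) :
    |birkhoffAverage ℝ T f n x| ≤ C := by
  rcases n.eq_zero_or_pos with rfl | hn
  · simpa using (abs_nonneg _).trans (hfC x)
  · rw [birkhoffAverage, smul_eq_mul, abs_mul, abs_inv, Nat.abs_cast,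
      inv_mul_le_iff₀ (by exact_mod_cast hn)]
    exact abs_birkhoffSum_le hfC n x

theorem partialSups_birkhoffSum_nonneg (N : ℕ) (x : Ω) :
    0 ≤ partialSups (birkhoffSum T f) N x := by
  rw [Pi.partialSups_apply]
  exact le_partialSups_of_le (birkhoffSum T f · x) (Nat.zero_le N)

theorem partialSups_birkhoffSum_le (N : ℕ) (x : Ω) :
    partialSups (birkhoffSum T f) N x ≤ max 0 (f x + partialSups (birkhoffSum T f) N (T x)) := by
  rw [Pi.partialSups_apply]
  refine partialSups_le _ _ _ fun k hk => ?_
  rcases k with _ | k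
  · exact le_max_left _ _
  · rw [birkhoffSum_succ', Pi.partialSups_apply]
    exact le_max_of_le_right <| add_le_add le_rfl
      (le_partialSups_of_le (birkhoffSum T f · (T x)) (by omega))

theorem abs_partialSups_birkhoffSum_le (hfC : ∀ x, |f x| ≤ C) (N : ℕ) (x : Ω) :
    |partialSups (birkhoffSum T f) N x| ≤ N * C := by
  have hC : 0 ≤ C := (abs_nonneg _).trans (hfC x)
  rw [abs_of_nonneg (partialSups_birkhoffSum_nonneg N x), Pi.partialSups_apply]
  refine partialSups_le _ _ _ fun k hk => ?_
  calc birkhoffSum T f k x ≤ k * C := (le_abs_self _).trans (abs_birkhoffSum_le hfC k x)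
    _ ≤ N * C := by gcongr

theorem limsup_birkhoffAverage_apply (hfC : ∀ x, |f x| ≤ C) (x : Ω) :
    limsup (birkhoffAverage ℝ T f · (T x)) atTop = limsup (birkhoffAverage ℝ T f · x) atTop :=
  limsup_eq_limsup_of_tendsto_sub (fun n => abs_birkhoffAverage_le hfC n _)
    (fun n => abs_birkhoffAverage_le hfC n _)
    (tendsto_birkhoffAverage_apply_sub_birkhoffAverage' ℝ
      ((Metric.isBounded_Icc (-C) C).subset (Set.range_subset_iff.2 fun x => abs_le.1 (hfC x)))
      T x)

variable [MeasurableSpace Ω] {μ : Measure Ω}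

theorem measurable_birkhoffSum (hT : Measurable T) (hf : Measurable f) (n : ℕ) :
    Measurable (birkhoffSum T f n) :=
  Finset.measurable_sum _ fun k _ => hf.comp (hT.iterate k)

theorem measurable_birkhoffAverage (hT : Measurable T) (hf : Measurable f) (n : ℕ) :
    Measurable (birkhoffAverage ℝ T f n) :=
  (measurable_birkhoffSum hT hf n).const_smul (n : ℝ)⁻¹

theorem measurable_partialSups_birkhoffSum (hT : Measurable T) (hf : Measurable f) (N : ℕ) :
    Measurable (partialSups (birkhoffSum T f) N) := by
  rw [partialSups_eq_sup'_range]
  exact Finset.measurable_range_sup' fun k _ => measurable_birkhoffSum hT hf k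

theorem maximal_ergodic_inequality [IsFiniteMeasure μ] (hT : MeasurePreserving T μ μ)
    (hf : Measurable f) (hfC : ∀ x, |f x| ≤ C) (N : ℕ) :
    0 ≤ ∫ x in {x | 0 < partialSups (birkhoffSum T f) N x}, f x ∂μ := by
  set F := partialSups (birkhoffSum T f) N
  set A := {x | 0 < F x}
  have hFm : Measurable F := measurable_partialSups_birkhoffSum hT.measurable hf N
  have hF : Integrable F μ :=
    .of_bound hFm.aestronglyMeasurable _ (.of_forall (abs_partialSups_birkhoffSum_le hfC N))
  have hFT : Integrable (F ∘ T) μ := hT.integrable_comp_of_integrable hF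
  have hA : MeasurableSet A := measurableSet_lt measurable_const hFm
  calc (0 : ℝ) = ∫ x, F x ∂μ - ∫ x, F (T x) ∂μ := by
        rw [← integral_map hT.measurable.aemeasurable hFm.aestronglyMeasurable, hT.map_eq,
          sub_self]
    _ ≤ ∫ x in A, F x ∂μ - ∫ x in A, F (T x) ∂μ := by
        refine sub_le_sub (setIntegral_eq_integral_of_forall_compl_eq_zero fun x hx =>
            (partialSups_birkhoffSum_nonneg N x).antisymm' (not_lt.1 hx)).ge
          (setIntegral_le_integral hFT (.of_forall fun x => partialSups_birkhoffSum_nonneg N _))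
    _ = ∫ x in A, (F x - F (T x)) ∂μ := (integral_sub hF.integrableOn hFT.integrableOn).symm
    _ ≤ ∫ x in A, f x ∂μ := by
        refine setIntegral_mono_on (hF.sub hFT).integrableOn
          (Integrable.of_bound hf.aestronglyMeasurable C (.of_forall hfC)).integrableOn hA
          fun x hx => ?_
        have := (le_max_iff.1 (partialSups_birkhoffSum_le N x)).resolve_left (not_le.2 hx)
        linarith

theorem integral_nonneg_of_ae_exists_birkhoffSum_pos [IsFiniteMeasure μ]
    (hT : MeasurePreserving T μ μ) (hf : Measurable f) (hfC : ∀ x, |f x| ≤ C)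
    (h : ∀ᵐ x ∂μ, ∃ n, 0 < birkhoffSum T f n x) :
    0 ≤ ∫ x, f x ∂μ := by
  set A : ℕ → Set Ω := fun N => {x | 0 < partialSups (birkhoffSum T f) N x}
  have hA N : MeasurableSet (A N) :=
    measurableSet_lt measurable_const (measurable_partialSups_birkhoffSum hT.measurable hf N)
  have hA_mono : Monotone A := fun N N' hN x hx =>
    hx.trans_le (partialSups_monotone (birkhoffSum T f) hN x)
  have hA_univ : ⋃ N, A N =ᵐ[μ] (Set.univ : Set Ω) := by
    refine eventuallyEq_set.2 ?_
    filter_upwards [h] with x ⟨n, hn⟩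
    simp only [Set.mem_iUnion, Set.mem_univ, iff_true]
    refine ⟨n, hn.trans_le ?_⟩
    rw [Pi.partialSups_apply]
    exact le_partialSups (birkhoffSum T f · x) n
  have hlim := tendsto_setIntegral_of_monotone hA hA_mono
    (Integrable.of_bound (μ := μ) hf.aestronglyMeasurable C (.of_forall hfC)).integrableOn
  rw [setIntegral_congr_set hA_univ, setIntegral_univ] at hlim
  exact ge_of_tendsto hlim (.of_forall fun N => maximal_ergodic_inequality hT hf hfC N)

theorem Ergodic.exists_ae_limsup_birkhoffAverage_eq (hT : Ergodic T μ) (hf : Measurable f)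
    (hfC : ∀ x, |f x| ≤ C) :
    ∃ c, ∀ᵐ x ∂μ, limsup (birkhoffAverage ℝ T f · x) atTop = c :=
  hT.ae_eq_const_of_ae_eq_comp₀
    (Measurable.limsup fun n => measurable_birkhoffAverage hT.measurable hf n).nullMeasurable
    (.of_forall fun x => limsup_birkhoffAverage_apply hfC x)

theorem Ergodic.ae_limsup_birkhoffAverage_le_integral [IsProbabilityMeasure μ]
    (hT : Ergodic T μ) (hf : Measurable f) (hfC : ∀ x, |f x| ≤ C) :
    ∀ᵐ x ∂μ, limsup (birkhoffAverage ℝ T f · x) atTop ≤ ∫ x, f x ∂μ := by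
  obtain ⟨c, hc⟩ := hT.exists_ae_limsup_birkhoffAverage_eq hf hfC
  suffices c ≤ ∫ x, f x ∂μ by filter_upwards [hc] with x hx using hx ▸ this
  refine le_of_forall_pos_le_add fun ε hε => ?_
  have hpos : ∀ᵐ x ∂μ, ∃ n, 0 < birkhoffSum T (fun y => f y - (c - ε)) n x := by
    filter_upwards [hc] with x hx
    have hfreq := frequently_lt_of_lt_limsup
      (isCoboundedUnder_le_of_le atTop fun n => (abs_le.1 (abs_birkhoffAverage_le hfC n x)).1)
      (show c - ε < limsup (birkhoffAverage ℝ T f · x) atTop by rw [hx]; linarith)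
    obtain ⟨n, hn, hn1⟩ := (hfreq.and_eventually (eventually_ge_atTop 1)).exists
    refine ⟨n, ?_⟩
    have hn0 : (0 : ℝ) < n := by exact_mod_cast hn1
    rw [birkhoffAverage, smul_eq_mul, ← div_eq_inv_mul, lt_div_iff₀ hn0] at hn
    simp only [birkhoffSum, Finset.sum_sub_distrib, Finset.sum_const, Finset.card_range,
      nsmul_eq_mul] at hn ⊢
    linarith
  have := integral_nonneg_of_ae_exists_birkhoffSum_pos (f := fun y => f y - (c - ε))
    hT.toMeasurePreserving (hf.sub measurable_const) (fun x => (abs_sub _ _).trans (add_le_add (hfC x) le_rfl)) hpos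
  rw [integral_sub (Integrable.of_bound hf.aestronglyMeasurable C (.of_forall hfC))
    (integrable_const _), integral_const, probReal_univ, one_smul] at this
  linarith

theorem Ergodic.ae_tendsto_birkhoffAverage_integral [IsProbabilityMeasure μ]
    (hT : Ergodic T μ) (hf : Measurable f) (hfC : ∀ x, |f x| ≤ C) :
    ∀ᵐ x ∂μ, Tendsto (birkhoffAverage ℝ T f · x) atTop (𝓝 (∫ x, f x ∂μ)) := by
  have hbdd (g : Ω → ℝ) (hgC : ∀ x, |g x| ≤ C) (x : Ω) :
      IsBoundedUnder (· ≤ ·) atTop (birkhoffAverage ℝ T g · x) :=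
    isBoundedUnder_of ⟨C, fun n => (abs_le.1 (abs_birkhoffAverage_le hgC n x)).2⟩
  have hnegC : ∀ x, |(-f) x| ≤ C := fun x => by simpa using hfC x
  filter_upwards [hT.ae_limsup_birkhoffAverage_le_integral hf hfC,
    hT.ae_limsup_birkhoffAverage_le_integral hf.neg hnegC] with x hx hx_neg
  refine tendsto_order.2 ⟨fun a ha => ?_,
    fun a ha => eventually_lt_of_limsup_lt (hx.trans_lt ha) (hbdd f hfC x)⟩
  have hlt : limsup (birkhoffAverage ℝ T (-f) · x) atTop < -a := by
    refine hx_neg.trans_lt ?_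
    rw [integral_neg']
    linarith
  filter_upwards [eventually_lt_of_limsup_lt hlt (hbdd (-f) hnegC x)] with n hn
  rw [birkhoffAverage_neg, Pi.neg_apply, Pi.neg_apply] at hn
  linarith

end Birkhoff

open Matrix

theorem Matrix.list_prod_map_vecMulVec {ι n R : Type*} [Fintype n] [DecidableEq n]
    [CommSemiring R] (u : ι → n → R) (v : n → R) (i : ι) (l : List ι) :
    ((i :: l).map fun j => vecMulVec (u j) v).prod
      = (l.map fun j => v ⬝ᵥ u j).prod • vecMulVec (u i) v := by
  induction l generalizing i with
  | nil => simp
  | cons j l ih =>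
    rw [List.map_cons, List.prod_cons, ih j, mul_smul_comm, vecMulVec_mul_vecMulVec,
      vecMulVec_smul, smul_smul, List.map_cons, List.prod_cons, mul_comm]

theorem Matrix.eq_vecMulVec_of_det_eq_zero {K : Type*} [Field K] {A : Matrix (Fin 2) (Fin 2) K}
    (h₀ : A 0 0 ≠ 0) (hA : A.det = 0) : A = vecMulVec (fun i => A i 0) ![1, A 0 1 / A 0 0] := by
  rw [det_fin_two] at hA
  ext i j
  fin_cases i <;> fin_cases j <;> simp [vecMulVec_apply]
  · exact (mul_div_cancel₀ _ h₀).symm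
  · rw [mul_div_assoc', eq_div_iff h₀]
    linear_combination hA

theorem matNorm_smul {m n : Type*} [Fintype m] [Fintype n] (r : ℝ) (A : Matrix m n ℝ) :
    matNorm (r • A) = |r| * matNorm A := by
  simp only [matNorm, Matrix.smul_apply, smul_eq_mul, abs_mul, Finset.mul_sum]

theorem abs_le_matNorm {m n : Type*} [Fintype m] [Fintype n] (A : Matrix m n ℝ) (i : m) (j : n) :
    |A i j| ≤ matNorm A :=
  calc |A i j| ≤ ∑ j', |A i j'| :=
        Finset.single_le_sum (fun j' _ => abs_nonneg (A i j')) (Finset.mem_univ j)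
    _ ≤ matNorm A :=
        Finset.single_le_sum (f := fun i' => ∑ j, |A i' j|)
          (fun _ _ => Finset.sum_nonneg fun _ _ => abs_nonneg _) (Finset.mem_univ i)

theorem matNorm_vecMulVec_pos {n : Type*} [Fintype n] {u v : n → ℝ} (h : v ⬝ᵥ u ≠ 0) :
    0 < matNorm (vecMulVec u v) := by
  obtain ⟨b, -, hb⟩ := Finset.exists_ne_zero_of_sum_ne_zero h
  calc 0 < |vecMulVec u v b b| := by rw [vecMulVec_apply, mul_comm]; exact abs_pos.2 hb
    _ ≤ matNorm (vecMulVec u v) := abs_le_matNorm _ b b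

theorem log_matNorm_list_prod_vecMulVec {ι n : Type*} [Fintype n] [DecidableEq n]
    {u : ι → n → ℝ} {v : n → ℝ} (hrate : ∀ i, 0 < v ⬝ᵥ u i) (i : ι) (l : List ι) :
    Real.log (matNorm ((i :: l).map fun j => vecMulVec (u j) v).prod)
      = (l.map fun j => Real.log (v ⬝ᵥ u j)).sum + Real.log (matNorm (vecMulVec (u i) v)) := by
  have hprod_pos : 0 < (l.map fun j => v ⬝ᵥ u j).prod :=
    List.prod_pos fun x hx => by
      obtain ⟨j, -, rfl⟩ := List.mem_map.1 hx
      exact hrate j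
  rw [list_prod_map_vecMulVec, matNorm_smul, abs_of_pos hprod_pos,
    Real.log_mul hprod_pos.ne' (matNorm_vecMulVec_pos (hrate i).ne').ne',
    Real.log_list_prod fun x hx => ?_, List.map_map]
  · rfl
  · obtain ⟨j, -, rfl⟩ := List.mem_map.1 hx
    exact (hrate j).ne'

section StationaryMarginal

variable {Ω ι : Type*} [MeasurableSpace Ω] {μ : Measure Ω} [Fintype ι] [MeasurableSpace ι]
  [MeasurableSingletonClass ι] {e : Ω → ι}

theorem measure_preimage_singleton_eq_of_transitions {e' : Ω → ι} (he' : Measurable e')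
    {π : ι → ℝ} {P : Matrix ι ι ℝ} (hπ : ∀ i, 0 ≤ π i) (hP : ∀ i j, 0 ≤ P i j)
    (hP_row : ∀ i, ∑ j, P i j = 1)
    (h : ∀ i j, μ {ω | e ω = i ∧ e' ω = j} = ENNReal.ofReal (π i * P i j)) (i : ι) :
    μ (e ⁻¹' {i}) = ENNReal.ofReal (π i) := by
  rw [← Measure.restrict_apply_univ, ← Set.preimage_univ (f := e'), ← Finset.coe_univ,
    ← sum_measure_preimage_singleton _ fun j _ => he' (measurableSet_singleton j)]
  calc ∑ j, μ.restrict (e ⁻¹' {i}) (e' ⁻¹' {j})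
      = ∑ j, ENNReal.ofReal (π i * P i j) := by
        refine Finset.sum_congr rfl fun j _ => ?_
        rw [Measure.restrict_apply (he' (measurableSet_singleton j)), ← h, Set.inter_comm]
        rfl
    _ = ENNReal.ofReal (π i) := by
        rw [← ENNReal.ofReal_sum_of_nonneg fun j _ => mul_nonneg (hπ i) (hP i j),
          ← Finset.mul_sum, hP_row, mul_one]

theorem integral_comp_eq_sum_of_measure_preimage [IsFiniteMeasure μ] (he : Measurable e)
    (φ : ι → ℝ) {π : ι → ℝ} (hπ : ∀ i, 0 ≤ π i)
    (h : ∀ i, μ (e ⁻¹' {i}) = ENNReal.ofReal (π i)) :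
    ∫ ω, φ (e ω) ∂μ = ∑ i, π i * φ i := by
  rw [← integral_map he.aemeasurable (measurable_of_finite φ).aestronglyMeasurable,
    integral_fintype Integrable.of_finite]
  simp [measureReal_def, Measure.map_apply he (measurableSet_singleton _), h, hπ]

end StationaryMarginal

theorem tendsto_div_of_add_one_eq {a b : ℕ → ℝ} {c L : ℝ}
    (hb : Tendsto (fun n => b n / n) atTop (𝓝 L)) (hab : ∀ n, a (n + 1) = b n + c) :
    Tendsto (fun n => a n / n) atTop (𝓝 L) := by
  rw [← tendsto_add_atTop_iff_nat 1]
  have h := (hb.mul (tendsto_natCast_div_add_atTop (1 : ℝ))).add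
    ((tendsto_add_atTop_iff_nat 1).2 (tendsto_const_div_atTop_nhds_zero_nat c))
  rw [mul_one, add_zero] at h
  refine h.congr' ((eventually_ne_atTop 0).mono fun n hn => ?_)
  dsimp only
  rw [hab]
  push_cast
  field_simp

theorem Ergodic.ae_tendsto_log_matNorm_list_prod_vecMulVec {Ω ι n : Type*} [MeasurableSpace Ω]
    {μ : Measure Ω} [IsProbabilityMeasure μ] {T : Ω → Ω} (hT : Ergodic T μ) [Fintype ι]
    [MeasurableSpace ι] [MeasurableSingletonClass ι] {e : Ω → ι} (he : Measurable e)
    [Fintype n] [DecidableEq n] {u : ι → n → ℝ} {v : n → ℝ} (hrate : ∀ i, 0 < v ⬝ᵥ u i) :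
    ∀ᵐ ω ∂μ, Tendsto (fun N : ℕ =>
        Real.log (matNorm (((List.range N).map fun k => vecMulVec (u (e (T^[k+1] ω))) v).prod)) / N)
      atTop (𝓝 (∫ ω, Real.log (v ⬝ᵥ u (e ω)) ∂μ)) := by
  set g : Ω → ℝ := fun ω => Real.log (v ⬝ᵥ u (e ω))
  have hg : Measurable g := (measurable_of_finite fun i => Real.log (v ⬝ᵥ u i)).comp he
  have hgC (ω : Ω) : |g ω| ≤ ∑ i, |Real.log (v ⬝ᵥ u i)| :=
    Finset.single_le_sum (f := fun i => |Real.log (v ⬝ᵥ u i)|) (fun i _ => abs_nonneg _)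
      (Finset.mem_univ (e ω))
  have hq := hT.toMeasurePreserving.quasiMeasurePreserving
  filter_upwards [hq.ae (hq.ae (hT.ae_tendsto_birkhoffAverage_integral hg hgC))] with ω hω
  refine tendsto_div_of_add_one_eq (b := fun N => birkhoffSum T g N (T (T ω)))
    (c := Real.log (matNorm (vecMulVec (u (e (T ω))) v)))
    (hω.congr fun N => by rw [birkhoffAverage, smul_eq_mul, inv_mul_eq_div]) fun N => ?_
  have hlist : (List.range (N + 1)).map (fun k => vecMulVec (u (e (T^[k+1] ω))) v)
      = (e (T ω) :: (List.range N).map fun k => e (T^[k] (T (T ω)))).map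
          fun j => vecMulVec (u j) v := by
    rw [List.range_succ_eq_map, List.map_cons, List.map_cons, List.map_map, List.map_map]
    rfl
  rw [hlist, log_matNorm_list_prod_vecMulVec hrate, List.map_map]
  rfl

theorem envPi_nonneg {s : Fin 2 → ℝ} (hs : ∀ i, 0 ≤ s i) (i : Fin 2) : 0 ≤ envPi s i := by
  have hsum : 0 ≤ s 0 + s 1 := add_nonneg (hs 0) (hs 1)
  fin_cases i
  · exact div_nonneg (hs 1) hsum
  · exact div_nonneg (hs 0) hsum

theorem envP_nonneg {s : Fin 2 → ℝ} (hs : ∀ i, s i ∈ Set.Icc (0 : ℝ) 1) (i j : Fin 2) :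
    0 ≤ envP s i j := by
  obtain ⟨h0, h0'⟩ := hs 0
  obtain ⟨h1, h1'⟩ := hs 1
  fin_cases i <;> fin_cases j <;> simp [envP] <;> linarith

theorem sum_envP (s : Fin 2 → ℝ) (i : Fin 2) : ∑ j, envP s i j = 1 := by
  fin_cases i <;> simp [envP, Fin.sum_univ_two]

theorem sum_envPi_mul (s φ : Fin 2 → ℝ) :
    ∑ i, envPi s i * φ i = (s 1 * φ 0 + s 0 * φ 1) / (s 0 + s 1) := by
  simp only [envPi, Fin.sum_univ_two, Matrix.cons_val_zero, Matrix.cons_val_one]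
  ring

theorem switcher_eq_vecMulVec {ma md α w1 w2 d1 d2 : ℝ} (hma : ma ≠ 0) (hα : α ≠ 0)
    {M : Fin 2 → Matrix (Fin 2) (Fin 2) ℝ}
    (hM : M = ![!![ma, md; w1, 1 - w1 - d1], !![α * ma, α * md; w2, 1 - w2 - d2]])
    (hdet1 : (M 0).det = 0) (hdet2 : (M 1).det = 0) :
    M = fun i => vecMulVec (![![ma, w1], ![α * ma, w2]] i) ![1, md / ma] := by
  funext i
  have h₀ : M i 0 0 ≠ 0 := by fin_cases i <;> simp [hM, hma, hα]
  have hv : M i 0 1 / M i 0 0 = md / ma := by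
    fin_cases i <;> simp [hM, mul_div_mul_left _ _ hα]
  rw [eq_vecMulVec_of_det_eq_zero h₀ (by fin_cases i <;> assumption), hv]
  congr 1
  ext a
  fin_cases i <;> fin_cases a <;> simp [hM]

theorem stochastic_switcher_lyapunov_general
    {Ω : Type*} [MeasurableSpace Ω] (μ : Measure Ω) [IsProbabilityMeasure μ]
    (T : Ω → Ω) (hT : Ergodic T μ) (e : Ω → Fin 2) (he : Measurable e)
    (s : Fin 2 → ℝ) (hs : ∀ i, s i ∈ Set.Ioc (0 : ℝ) 1)
    (henv : ∀ i j : Fin 2, μ {ω | e ω = i ∧ e (T ω) = j}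
      = ENNReal.ofReal (envPi s i * envP s i j))
    (ma md α w1 w2 d1 d2 : ℝ) (hma : 0 < ma) (hmd : 0 ≤ md) (hα : α ∈ Set.Ioo (0 : ℝ) 1)
    (hw1 : 0 ≤ w1) (hw2 : 0 ≤ w2)
    (M : Fin 2 → Matrix (Fin 2) (Fin 2) ℝ)
    (hM : M = ![!![ma, md; w1, 1 - w1 - d1], !![α * ma, α * md; w2, 1 - w2 - d2]])
    (hdet1 : (M 0).det = 0) (hdet2 : (M 1).det = 0) :
    ∀ᵐ ω ∂μ, Tendsto (fun n : ℕ =>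
        Real.log (matNorm (((List.range n).map (fun k => M (e (T^[k+1] ω)))).prod)) / n)
      atTop (𝓝 ((s 1 * Real.log (ma + w1 * (md / ma))
        + s 0 * Real.log (α * ma + w2 * (md / ma))) / (s 0 + s 1))) := by
  have hMuv := switcher_eq_vecMulVec hma.ne' hα.1.ne' hM hdet1 hdet2
  set u : Fin 2 → Fin 2 → ℝ := ![![ma, w1], ![α * ma, w2]]
  set lam : Fin 2 → ℝ := ![ma + w1 * (md / ma), α * ma + w2 * (md / ma)]
  have hrate (i : Fin 2) : ![1, md / ma] ⬝ᵥ u i = lam i := by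
    fin_cases i <;> simp [u, lam, dotProduct, Fin.sum_univ_two] <;> ring
  have hlam_pos (i : Fin 2) : 0 < lam i := by
    have hmd_ma : 0 ≤ md / ma := div_nonneg hmd hma.le
    fin_cases i
    · exact add_pos_of_pos_of_nonneg hma (mul_nonneg hw1 hmd_ma)
    · exact add_pos_of_pos_of_nonneg (mul_pos hα.1 hma) (mul_nonneg hw2 hmd_ma)
  have hint : ∫ ω, Real.log (lam (e ω)) ∂μ = (s 1 * Real.log (ma + w1 * (md / ma))
      + s 0 * Real.log (α * ma + w2 * (md / ma))) / (s 0 + s 1) := by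
    have hπ := envPi_nonneg fun i => (hs i).1.le
    rw [integral_comp_eq_sum_of_measure_preimage he (fun i => Real.log (lam i)) hπ
      (measure_preimage_singleton_eq_of_transitions (he.comp hT.measurable) hπ
        (envP_nonneg fun i => Set.Ioc_subset_Icc_self (hs i)) (sum_envP s) henv), sum_envPi_mul]
    rfl
  have hlyap := hT.ae_tendsto_log_matNorm_list_prod_vecMulVec he
    (u := u) (v := ![1, md / ma]) fun i => (hrate i).symm ▸ hlam_pos i
  simp_rw [hrate, hint] at hlyap
  rwa [hMuv]

/-- Lyapunov exponent of the stochastic switcher with vanishing determinants. -/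
theorem stochastic_switcher_lyapunov
    {Ω : Type*} [MeasurableSpace Ω] (μ : Measure Ω) [IsProbabilityMeasure μ]
    (T : Ω → Ω) (hT : Ergodic T μ) (e : Ω → Fin 2) (he : Measurable e)
    (s : Fin 2 → ℝ) (hs : ∀ i, s i ∈ Set.Ioc (0 : ℝ) 1) (hss : s 0 * s 1 < 1)
    (henv : ∀ i j : Fin 2, μ {ω | e ω = i ∧ e (T ω) = j}
      = ENNReal.ofReal (envPi s i * envP s i j))
    (ma md α w1 w2 d1 d2 : ℝ) (hma : 0 < ma) (hmd : 0 ≤ md) (hα : α ∈ Set.Ioo (0 : ℝ) 1)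
    (hw1 : 0 ≤ w1) (hw2 : 0 ≤ w2) (hd1 : 0 ≤ d1) (hd2 : 0 ≤ d2)
    (hwd1 : w1 + d1 ≤ 1) (hwd2 : w2 + d2 ≤ 1)
    (M : Fin 2 → Matrix (Fin 2) (Fin 2) ℝ)
    (hM : M = ![!![ma, md; w1, 1 - w1 - d1], !![α * ma, α * md; w2, 1 - w2 - d2]])
    (hdet1 : (M 0).det = 0) (hdet2 : (M 1).det = 0) :
    ∀ᵐ ω ∂μ, Tendsto (fun n : ℕ =>
        Real.log (matNorm (((List.range n).map (fun k => M (e (T^[k+1] ω)))).prod)) / n)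
      atTop (𝓝 ((s 1 * Real.log (ma + w1 * (md / ma))
        + s 0 * Real.log (α * ma + w2 * (md / ma))) / (s 0 + s 1))) :=
  stochastic_switcher_lyapunov_general μ T hT e he s hs henv ma md α w1 w2 d1 d2 hma hmd hα hw1 hw2
    M hM hdet1 hdet2
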